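/- (Properties of T(L) across regimes.) The target-loss function T(L) satisfies: (1) T(L) = +∞ (infeasible) for 0 ≤ L < L_min; (2) the problem is feasible and T(L) < ∞ for all L ≥ L_min; (3) T is continuous on [L_min, ∞); (4) T is strictly decreasing on [L_min, L_max], and on this interval the optimum is attained with the loss constraint holding with equality; (5) for L ≥ L_Max the loss constraint is vacuous, so T(L) = T(L_Max) for all L ≥ L_Max. -/

import Mathlib

open Real

noncomputable section

variable {V U W : Type*} [Fintype V] [Fintype U] [Fintype W]
  [DecidableEq V] [DecidableEq U]

/-- `q(u|v)` is a conditional distribution supported on the edge set `E`. -/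
def CondDistOn (E : Finset (V × U)) (q : V → U → ℝ) : Prop :=
  (∀ v u, 0 ≤ q v u) ∧ (∀ v, ∑ u, q v u = 1) ∧ (∀ v u, q v u ≠ 0 → (v, u) ∈ E)

/-- Generalized K-L divergence `GD_E(q‖r)`. -/
def GDE (E : Finset (V × U)) (p : V → ℝ) (pw : V → U → W → ℝ)
    (q : V → U → ℝ) (r : W → U → ℝ) : ℝ :=
  ∑ v, ∑ u, ∑ w, if (v, u) ∈ E then p v * q v u * pw v u w * Real.log (q v u / r w u) else 0

/-- Expected loss `Loss(q) = Σ p(v) q(u|v) ℓ̃(v,u)`. -/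
def LossE (E : Finset (V × U)) (p : V → ℝ) (lt : V → U → ℝ) (q : V → U → ℝ) : ℝ :=
  ∑ v, ∑ u, if (v, u) ∈ E then p v * q v u * lt v u else 0

/-- The joint distribution `p(v,u,w) = p(v) q(u|v) p(w|u,v)`. -/
def jointD (E : Finset (V × U)) (p : V → ℝ) (pw : V → U → W → ℝ) (q : V → U → ℝ)
    (v : V) (u : U) (w : W) : ℝ :=
  if (v, u) ∈ E then p v * q v u * pw v u w else 0

/-- Marginal `p(u)`. -/
def margU (p : V → ℝ) (q : V → U → ℝ) (u : U) : ℝ := ∑ v, p v * q v u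

/-- Marginal `p(u,w)`. -/
def margUW (E : Finset (V × U)) (p : V → ℝ) (pw : V → U → W → ℝ) (q : V → U → ℝ)
    (u : U) (w : W) : ℝ := ∑ v, jointD E p pw q v u w

/-- Marginal `p(w)`. -/
def margW (E : Finset (V × U)) (p : V → ℝ) (pw : V → U → W → ℝ) (q : V → U → ℝ)
    (w : W) : ℝ := ∑ u, margUW E p pw q u w

/-- Mutual information `I(U;V)`. -/
def IUV (p : V → ℝ) (q : V → U → ℝ) : ℝ :=
  ∑ v, ∑ u, p v * q v u * Real.log (q v u / margU p q u)

/-- Mutual information `I(U;W)`. -/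
def IUW (E : Finset (V × U)) (p : V → ℝ) (pw : V → U → W → ℝ) (q : V → U → ℝ) : ℝ :=
  ∑ u, ∑ w, margUW E p pw q u w *
    Real.log (margUW E p pw q u w / (margU p q u * margW E p pw q w))

/-- Objective `I(U;V) - I(U;W)`. -/
def Obj (E : Finset (V × U)) (p : V → ℝ) (pw : V → U → W → ℝ) (q : V → U → ℝ) : ℝ :=
  IUV p q - IUW E p pw q

/-- The induced conditional distribution `r*(q)(u|w)`. -/
def rstar (E : Finset (V × U)) (p : V → ℝ) (pw : V → U → W → ℝ) (q : V → U → ℝ)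
    (w : W) (u : U) : ℝ := margUW E p pw q u w / margW E p pw q w

/-- Gibbs update `q_s^*(r)(u|v)`. -/
def qstar (E : Finset (V × U)) (pw : V → U → W → ℝ) (lt : V → U → ℝ)
    (s : ℝ) (r : W → U → ℝ) (v : V) (u : U) : ℝ :=
  (if (v, u) ∈ E then Real.exp (-s * lt v u) * ∏ w', r w' u ^ pw v u w' else 0) /
  (∑ u', if (v, u') ∈ E then Real.exp (-s * lt v u') * ∏ w', r w' u' ^ pw v u' w' else 0)

/-- The penalty (Lagrangian) function `F_s(q,r)`. -/
def FPen (E : Finset (V × U)) (p : V → ℝ) (pw : V → U → W → ℝ) (lt : V → U → ℝ)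
    (s : ℝ) (q : V → U → ℝ) (r : W → U → ℝ) : ℝ :=
  GDE E p pw q r + s * LossE E p lt q

/-- Generalized K-L divergence between two conditional distributions on `E`. -/
def GDcond (E : Finset (V × U)) (p : V → ℝ) (q1 q2 : V → U → ℝ) : ℝ :=
  ∑ v, ∑ u, if (v, u) ∈ E then p v * q1 v u * Real.log (q1 v u / q2 v u) else 0

/-- Conditional K-L divergence `GD_q(r1‖r2)` weighted by `q(w)`. -/
def GDr (E : Finset (V × U)) (p : V → ℝ) (pw : V → U → W → ℝ) (q : V → U → ℝ)
    (r1 r2 : W → U → ℝ) : ℝ :=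
  ∑ u, ∑ w, margW E p pw q w * r1 w u * Real.log (r1 w u / r2 w u)

/-- The target-loss function `T(L)` (valued in `EReal`, `+∞` if infeasible). -/
def TL (E : Finset (V × U)) (p : V → ℝ) (pw : V → U → W → ℝ) (lt : V → U → ℝ)
    (L : ℝ) : EReal :=
  sInf {x : EReal | ∃ q, CondDistOn E q ∧ LossE E p lt q ≤ L ∧ x = (Obj E p pw q : EReal)}


/-!
`T(L)` is the value of minimizing the continuous function `Obj` over the compact set of
conditional distributions `q` with `Loss q ≤ L`. So it is attained as soon as this set is
nonempty, i.e. for `L ≥ Lmin` (a deterministic `q` picking a cheapest edge reaches `Lmin`), and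
the constraint is vacuous for `L ≥ LMax`.

The key fact is the convexity of `Obj`: it is the minimum over `r` of the divergence
`GD_E(q‖r)`, attained at `r = r*(q)` (Gibbs), and `GD_E` is jointly convex by the log-sum
inequality. As `Loss` is linear, `T` is convex on `[Lmin, ∞)`, hence continuous on the interior;
at `Lmin` it is right-continuous by compactness. A convex function with `f x ≤ f y` for some
`x < y` is minimal at `y`, so minimality of `Lmax` makes `T` strictly decreasing on
`[Lmin, Lmax]`, and then an optimal `q` must use up the whole loss budget.
-/

set_option linter.unusedSectionVars false

namespace Real

lemma mul_log_div_eq_of_ne {c x y : ℝ} (h : c ≠ 0 → x ≠ 0 ∧ y ≠ 0) :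
    c * log (x / y) = c * log x - c * log y := by
  by_cases hc : c = 0
  · simp [hc]
  · rw [log_div (h hc).1 (h hc).2]
    ring

lemma mul_log_le_mul_log_div_add {a M r : ℝ} (ha : 0 ≤ a) (haM : a ≤ M) (hr : 0 ≤ r)
    (har : a ≠ 0 → r ≠ 0) : a * log r ≤ a * log (a / M) + (M * r - a) := by
  rcases ha.eq_or_lt with rfl | ha
  · simpa using mul_nonneg (ha.trans haM) hr
  have hr : 0 < r := hr.lt_of_ne' (har ha.ne')
  have hM : 0 < M := ha.trans_le haM
  have key := mul_le_mul_of_nonneg_left (log_le_sub_one_of_pos (by positivity : 0 < M * r / a))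
    ha.le
  rw [log_div (by positivity) ha.ne', log_mul hM.ne' hr.ne'] at key
  have hcancel : a * (M * r / a - 1) = M * r - a := by field_simp
  rw [log_div ha.ne' hM.ne']
  linarith

/-- The log-sum inequality for two terms. -/
lemma mul_log_div_add_le {a₀ a₁ b₀ b₁ : ℝ} (ha₀ : 0 ≤ a₀) (ha₁ : 0 ≤ a₁) (hb₀ : 0 ≤ b₀)
    (hb₁ : 0 ≤ b₁) (h₀ : b₀ = 0 → a₀ = 0) (h₁ : b₁ = 0 → a₁ = 0) :
    (a₀ + a₁) * log ((a₀ + a₁) / (b₀ + b₁)) ≤ a₀ * log (a₀ / b₀) + a₁ * log (a₁ / b₁) := by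
  rcases hb₀.eq_or_lt with rfl | hb₀
  · simp [h₀ rfl]
  rcases hb₁.eq_or_lt with rfl | hb₁
  · simp [h₁ rfl]
  have hB : 0 < b₀ + b₁ := by positivity
  have hcvx := convexOn_mul_log.2 (Set.mem_Ici.2 (div_nonneg ha₀ hb₀.le))
    (Set.mem_Ici.2 (div_nonneg ha₁ hb₁.le)) (div_nonneg hb₀.le hB.le) (div_nonneg hb₁.le hB.le)
    (by field_simp)
  have hmix : b₀ / (b₀ + b₁) * (a₀ / b₀) + b₁ / (b₀ + b₁) * (a₁ / b₁) = (a₀ + a₁) / (b₀ + b₁) := by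
    field_simp
  simp only [smul_eq_mul, hmix] at hcvx
  have := mul_le_mul_of_nonneg_left hcvx hB.le
  calc (a₀ + a₁) * log ((a₀ + a₁) / (b₀ + b₁))
      = (b₀ + b₁) * ((a₀ + a₁) / (b₀ + b₁) * log ((a₀ + a₁) / (b₀ + b₁))) := by field_simp
    _ ≤ _ := this
    _ = a₀ * log (a₀ / b₀) + a₁ * log (a₁ / b₁) := by field_simp

lemma mul_log_div_mul_mul {c a b : ℝ} (hc : 0 ≤ c) :
    c * a * log (c * a / (c * b)) = c * (a * log (a / b)) := by
  rcases hc.eq_or_lt with rfl | hc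
  · simp
  · rw [mul_div_mul_left _ _ hc.ne']
    ring

lemma mul_log_div_convex_comb {a₀ a₁ b₀ b₁ s t : ℝ} (ha₀ : 0 ≤ a₀) (ha₁ : 0 ≤ a₁)
    (hb₀ : 0 ≤ b₀) (hb₁ : 0 ≤ b₁) (h₀ : b₀ = 0 → a₀ = 0) (h₁ : b₁ = 0 → a₁ = 0)
    (hs : 0 ≤ s) (ht : 0 ≤ t) :
    (s * a₀ + t * a₁) * log ((s * a₀ + t * a₁) / (s * b₀ + t * b₁)) ≤
      s * (a₀ * log (a₀ / b₀)) + t * (a₁ * log (a₁ / b₁)) := by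
  rw [← mul_log_div_mul_mul hs, ← mul_log_div_mul_mul ht]
  refine mul_log_div_add_le (by positivity) (by positivity) (by positivity) (by positivity)
    ?_ ?_ <;> intro h <;> rcases mul_eq_zero.1 h with h | h <;> simp [h, h₀, h₁]

end Real

namespace Finset

variable {ι : Type*} [Fintype ι] {s : Finset ι} {w f : ι → ℝ}

lemma inf'_le_sum_mul (hs : s.Nonempty) (hw₀ : ∀ i, 0 ≤ w i) (hw₁ : ∑ i, w i = 1)
    (hws : ∀ i ∉ s, w i = 0) : s.inf' hs f ≤ ∑ i, w i * f i := by
  calc s.inf' hs f = ∑ i, w i * s.inf' hs f := by rw [← sum_mul, hw₁, one_mul]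
    _ ≤ ∑ i, w i * f i := sum_le_sum fun i _ => by
        by_cases hi : i ∈ s
        · exact mul_le_mul_of_nonneg_left (inf'_le f hi) (hw₀ i)
        · simp [hws i hi]

lemma sum_mul_le_sup' (hs : s.Nonempty) (hw₀ : ∀ i, 0 ≤ w i) (hw₁ : ∑ i, w i = 1)
    (hws : ∀ i ∉ s, w i = 0) : ∑ i, w i * f i ≤ s.sup' hs f := by
  calc ∑ i, w i * f i ≤ ∑ i, w i * s.sup' hs f := sum_le_sum fun i _ => by
        by_cases hi : i ∈ s
        · exact mul_le_mul_of_nonneg_left (le_sup' f hi) (hw₀ i)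
        · simp [hws i hi]
    _ = s.sup' hs f := by rw [← sum_mul, hw₁, one_mul]

end Finset

lemma IsCompact.exists_gt_forall_lt_of_forall_le {X : Type*} [TopologicalSpace X] [T2Space X]
    {K : Set X} (hK : IsCompact K) {f g : X → ℝ} (hf : ContinuousOn f K) (hg : ContinuousOn g K)
    {L c : ℝ} (h : ∀ x ∈ K, g x ≤ L → c < f x) :
    ∃ L' > L, ∀ x ∈ K, g x < L' → c < f x := by
  have hS : IsCompact (K ∩ f ⁻¹' Set.Iic c) :=
    hK.of_isClosed_subset (hf.preimage_isClosed_of_isClosed hK.isClosed isClosed_Iic)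
      Set.inter_subset_left
  rcases (K ∩ f ⁻¹' Set.Iic c).eq_empty_or_nonempty with hempty | hne
  · refine ⟨L + 1, by linarith, fun x hx _ => not_le.1 fun hfx => ?_⟩
    exact hempty.subset ⟨hx, hfx⟩
  obtain ⟨x₀, ⟨hx₀K, hfx₀⟩, hmin⟩ := hS.exists_isMinOn hne (hg.mono Set.inter_subset_left)
  -- `L'` is the least value of `g` on the compact set where `f ≤ c`.
  refine ⟨g x₀, lt_of_not_ge fun hgx₀ => (h x₀ hx₀K hgx₀).not_ge hfx₀, fun x hx hgx => ?_⟩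
  exact lt_of_not_ge fun hfx => (hmin ⟨hx, hfx⟩).not_gt hgx

section

open Finset

variable {E : Finset (V × U)} {p : V → ℝ} {pw : V → U → W → ℝ} {lt : V → U → ℝ}
  {q q₀ q₁ : V → U → ℝ} {r r₀ r₁ : W → U → ℝ} {v : V} {u : U} {w : W} {L Lmin LMax : ℝ}

lemma CondDistOn.eq_zero (hq : CondDistOn E q) {v : V} {u : U} (h : (v, u) ∉ E) : q v u = 0 :=
  not_imp_comm.1 (hq.2.2 v u) h

lemma CondDistOn.le_one (hq : CondDistOn E q) (v : V) (u : U) : q v u ≤ 1 :=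
  hq.2.1 v ▸ single_le_sum (fun u _ => hq.1 v u) (mem_univ u)

lemma convex_setOf_condDistOn : Convex ℝ {q : V → U → ℝ | CondDistOn E q} := by
  intro q₀ hq₀ q₁ hq₁ a b ha hb hab
  refine ⟨fun v u => ?_, fun v => ?_, fun v u h => ?_⟩
  · simp only [Pi.add_apply, Pi.smul_apply, smul_eq_mul]
    exact add_nonneg (mul_nonneg ha (hq₀.1 v u)) (mul_nonneg hb (hq₁.1 v u))
  · simp [sum_add_distrib, ← mul_sum, hq₀.2.1, hq₁.2.1, hab]
  · by_contra hE
    simp [hq₀.eq_zero hE, hq₁.eq_zero hE] at h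

lemma isCompact_setOf_condDistOn : IsCompact {q : V → U → ℝ | CondDistOn E q} := by
  have hclosed : IsClosed {q : V → U → ℝ | CondDistOn E q} := by
    simp only [CondDistOn, Set.ofPred_and, Set.ofPred_forall]
    refine IsClosed.inter ?_ (IsClosed.inter ?_ ?_)
    · exact isClosed_iInter fun v => isClosed_iInter fun u =>
        isClosed_le continuous_const (by fun_prop)
    · exact isClosed_iInter fun v => isClosed_eq (by fun_prop) continuous_const
    · exact isClosed_iInter fun v => isClosed_iInter fun u =>
        isClosed_imp (isOpen_ne_fun (by fun_prop) continuous_const) isClosed_const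
  exact (isCompact_univ_pi fun _ => isCompact_univ_pi fun _ => isCompact_Icc).of_isClosed_subset
    hclosed fun q hq v _ u _ => ⟨hq.1 v u, hq.le_one v u⟩

lemma lossE_eq (hq : CondDistOn E q) : LossE E p lt q = ∑ v, p v * ∑ u, q v u * lt v u := by
  refine sum_congr rfl fun v _ => ?_
  rw [mul_sum]
  refine sum_congr rfl fun u _ => ?_
  split_ifs with h
  · ring
  · simp [hq.eq_zero h]

lemma continuous_lossE : Continuous (LossE E p lt) := by
  refine continuous_finsetSum _ fun v _ => continuous_finsetSum _ fun u _ => ?_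
  split_ifs <;> fun_prop

lemma lossE_add_smul (a b : ℝ) :
    LossE E p lt (a • q₀ + b • q₁) = a * LossE E p lt q₀ + b * LossE E p lt q₁ := by
  simp only [LossE, mul_sum, ← sum_add_distrib]
  refine sum_congr rfl fun v _ => sum_congr rfl fun u _ => ?_
  split_ifs
  · simp only [Pi.add_apply, Pi.smul_apply, smul_eq_mul]
    ring
  · simp

lemma lossE_nonneg (hp : ∀ v, 0 ≤ p v) (hlt : ∀ v u, 0 ≤ lt v u) (hq : CondDistOn E q) :
    0 ≤ LossE E p lt q := by
  rw [lossE_eq hq]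
  exact sum_nonneg fun v _ => mul_nonneg (hp v) <|
    sum_nonneg fun u _ => mul_nonneg (hq.1 v u) (hlt v u)

lemma isLeast_lossE (hp : ∀ v, 0 ≤ p v) (hne : ∀ v, (univ.filter fun u => (v, u) ∈ E).Nonempty) :
    IsLeast (LossE E p lt '' {q | CondDistOn E q})
      (∑ v, p v * (univ.filter fun u => (v, u) ∈ E).inf' (hne v) (lt v)) := by
  refine ⟨?_, ?_⟩
  · choose u hu hlu using fun v => exists_mem_eq_inf' (hne v) (lt v)
    have hq : CondDistOn E fun v u' => if u' = u v then 1 else 0 := by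
      refine ⟨fun v u' => by positivity, fun v => by simp, fun v u' h => ?_⟩
      rw [ite_ne_right_iff] at h
      exact h.1 ▸ (mem_filter.1 (hu v)).2
    refine ⟨_, hq, ?_⟩
    simp [lossE_eq hq, hlu]
  · rintro _ ⟨q, hq, rfl⟩
    rw [lossE_eq hq]
    exact sum_le_sum fun v _ => mul_le_mul_of_nonneg_left
      (inf'_le_sum_mul _ (hq.1 v) (hq.2.1 v) fun u hu => hq.eq_zero (by simpa using hu)) (hp v)

lemma lossE_le_sum_sup' (hp : ∀ v, 0 ≤ p v)
    (hne : ∀ v, (univ.filter fun u => (v, u) ∈ E).Nonempty) (hq : CondDistOn E q) :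
    LossE E p lt q ≤ ∑ v, p v * (univ.filter fun u => (v, u) ∈ E).sup' (hne v) (lt v) := by
  rw [lossE_eq hq]
  exact sum_le_sum fun v _ => mul_le_mul_of_nonneg_left
    (sum_mul_le_sup' _ (hq.1 v) (hq.2.1 v) fun u hu => hq.eq_zero (by simpa using hu)) (hp v)

lemma jointD_nonneg (hp : ∀ v, 0 ≤ p v) (hpw0 : ∀ v u w, 0 ≤ pw v u w) (hq : CondDistOn E q) :
    0 ≤ jointD E p pw q v u w := by
  unfold jointD
  split_ifs
  · exact mul_nonneg (mul_nonneg (hp v) (hq.1 v u)) (hpw0 v u w)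
  · rfl

lemma margUW_nonneg (hp : ∀ v, 0 ≤ p v) (hpw0 : ∀ v u w, 0 ≤ pw v u w) (hq : CondDistOn E q) :
    0 ≤ margUW E p pw q u w :=
  sum_nonneg fun _ _ => jointD_nonneg hp hpw0 hq

lemma jointD_le_margUW (hp : ∀ v, 0 ≤ p v) (hpw0 : ∀ v u w, 0 ≤ pw v u w)
    (hq : CondDistOn E q) : jointD E p pw q v u w ≤ margUW E p pw q u w :=
  single_le_sum (f := fun v => jointD E p pw q v u w) (fun _ _ => jointD_nonneg hp hpw0 hq)
    (mem_univ v)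

lemma margUW_le_margW (hp : ∀ v, 0 ≤ p v) (hpw0 : ∀ v u w, 0 ≤ pw v u w)
    (hq : CondDistOn E q) : margUW E p pw q u w ≤ margW E p pw q w :=
  single_le_sum (f := fun u => margUW E p pw q u w) (fun _ _ => margUW_nonneg hp hpw0 hq)
    (mem_univ u)

lemma margW_nonneg (hp : ∀ v, 0 ≤ p v) (hpw0 : ∀ v u w, 0 ≤ pw v u w) (hq : CondDistOn E q) :
    0 ≤ margW E p pw q w :=
  sum_nonneg fun _ _ => margUW_nonneg hp hpw0 hq

lemma sum_jointD (hpw1 : ∀ v u, (v, u) ∈ E → ∑ w, pw v u w = 1) (hq : CondDistOn E q) :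
    ∑ w, jointD E p pw q v u w = p v * q v u := by
  unfold jointD
  split_ifs with h
  · rw [← mul_sum, hpw1 v u h, mul_one]
  · simp [hq.eq_zero h]

lemma sum_margUW (hpw1 : ∀ v u, (v, u) ∈ E → ∑ w, pw v u w = 1) (hq : CondDistOn E q) :
    ∑ w, margUW E p pw q u w = margU p q u := by
  simp only [margUW]
  rw [sum_comm]
  exact sum_congr rfl fun v _ => sum_jointD hpw1 hq

lemma margUW_le_margU (hp : ∀ v, 0 ≤ p v) (hpw0 : ∀ v u w, 0 ≤ pw v u w)
    (hpw1 : ∀ v u, (v, u) ∈ E → ∑ w, pw v u w = 1) (hq : CondDistOn E q) :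
    margUW E p pw q u w ≤ margU p q u :=
  sum_margUW hpw1 hq ▸ single_le_sum (f := fun w => margUW E p pw q u w)
    (fun _ _ => margUW_nonneg hp hpw0 hq) (mem_univ w)

lemma jointD_add_smul (a b : ℝ) :
    jointD E p pw (a • q₀ + b • q₁) v u w =
      a * jointD E p pw q₀ v u w + b * jointD E p pw q₁ v u w := by
  unfold jointD
  split_ifs
  · simp only [Pi.add_apply, Pi.smul_apply, smul_eq_mul]
    ring
  · simp

lemma IUV_eq (hp : ∀ v, 0 < p v) (hq : CondDistOn E q) :
    IUV p q = ∑ v, ∑ u, p v * q v u * log (q v u) - ∑ u, margU p q u * log (margU p q u) := by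
  have hle : ∀ v u, p v * q v u ≤ margU p q u := fun v u =>
    single_le_sum (f := fun v => p v * q v u) (fun v _ => mul_nonneg (hp v).le (hq.1 v u))
      (mem_univ v)
  have hsplit : ∀ v u, p v * q v u * log (q v u / margU p q u) =
      p v * q v u * log (q v u) - p v * q v u * log (margU p q u) := fun v u =>
    mul_log_div_eq_of_ne fun h =>
      ⟨right_ne_zero_of_mul h, ((mul_nonneg (hp v).le (hq.1 v u)).lt_of_ne' h).trans_le (hle v u)
        |>.ne'⟩
  simp only [IUV, hsplit, sum_sub_distrib]
  rw [sum_comm (f := fun v u => p v * q v u * log (margU p q u))]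
  simp only [← sum_mul, margU]

lemma IUW_eq (hp : ∀ v, 0 ≤ p v) (hpw0 : ∀ v u w, 0 ≤ pw v u w)
    (hpw1 : ∀ v u, (v, u) ∈ E → ∑ w, pw v u w = 1) (hq : CondDistOn E q) :
    IUW E p pw q = ∑ u, ∑ w, margUW E p pw q u w *
        log (margUW E p pw q u w / margW E p pw q w)
      - ∑ u, margU p q u * log (margU p q u) := by
  have hsplit : ∀ u w, margUW E p pw q u w *
        log (margUW E p pw q u w / (margU p q u * margW E p pw q w)) =
      margUW E p pw q u w * log (margUW E p pw q u w / margW E p pw q w)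
        - margUW E p pw q u w * log (margU p q u) := by
    intro u w
    by_cases hm : margUW E p pw q u w = 0
    · simp [hm]
    have hm' := (margUW_nonneg hp hpw0 hq).lt_of_ne' hm
    have hU : margU p q u ≠ 0 := (hm'.trans_le (margUW_le_margU hp hpw0 hpw1 hq)).ne'
    have hW : margW E p pw q w ≠ 0 := (hm'.trans_le (margUW_le_margW hp hpw0 hq)).ne'
    rw [log_div hm (mul_ne_zero hU hW), log_mul hU hW, log_div hm hW]
    ring
  simp only [IUW, hsplit, sum_sub_distrib, ← sum_mul, sum_margUW hpw1 hq]

lemma Obj_eq (hp : ∀ v, 0 < p v) (hpw0 : ∀ v u w, 0 ≤ pw v u w)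
    (hpw1 : ∀ v u, (v, u) ∈ E → ∑ w, pw v u w = 1) (hq : CondDistOn E q) :
    Obj E p pw q = ∑ v, ∑ u, p v * q v u * log (q v u) -
      ∑ u, ∑ w, margUW E p pw q u w * log (margUW E p pw q u w / margW E p pw q w) := by
  rw [Obj, IUV_eq hp hq, IUW_eq (fun v => (hp v).le) hpw0 hpw1 hq]
  ring

/-- The entropy form `Obj = H(U|W) - H(U|V)`: a sum of the continuous functions `x ↦ x log x`. -/
lemma Obj_eq_sum_mul_log (hp : ∀ v, 0 < p v) (hpw0 : ∀ v u w, 0 ≤ pw v u w)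
    (hpw1 : ∀ v u, (v, u) ∈ E → ∑ w, pw v u w = 1) (hq : CondDistOn E q) :
    Obj E p pw q = ∑ v, ∑ u, p v * q v u * log (q v u) -
      ∑ u, ∑ w, margUW E p pw q u w * log (margUW E p pw q u w) +
      ∑ w, margW E p pw q w * log (margW E p pw q w) := by
  have hsplit : ∀ u w, margUW E p pw q u w * log (margUW E p pw q u w / margW E p pw q w) =
      margUW E p pw q u w * log (margUW E p pw q u w) -
        margUW E p pw q u w * log (margW E p pw q w) := fun u w =>
    mul_log_div_eq_of_ne fun h => ⟨h, ((margUW_nonneg (fun v => (hp v).le) hpw0 hq).lt_of_ne' h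
      |>.trans_le (margUW_le_margW (fun v => (hp v).le) hpw0 hq)).ne'⟩
  rw [Obj_eq hp hpw0 hpw1 hq, sum_congr rfl fun u _ => sum_congr rfl fun w _ => hsplit u w]
  simp only [sum_sub_distrib]
  rw [sum_comm (f := fun u w => margUW E p pw q u w * log (margW E p pw q w))]
  simp only [← sum_mul, margW]
  ring

lemma continuousOn_Obj (hp : ∀ v, 0 < p v) (hpw0 : ∀ v u w, 0 ≤ pw v u w)
    (hpw1 : ∀ v u, (v, u) ∈ E → ∑ w, pw v u w = 1) :
    ContinuousOn (Obj E p pw) {q | CondDistOn E q} := by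
  have hjoint : ∀ v u w, Continuous fun q : V → U → ℝ => jointD E p pw q v u w := by
    intro v u w
    unfold jointD
    split_ifs <;> fun_prop
  refine ContinuousOn.congr (Continuous.continuousOn ?_)
    fun q hq => Obj_eq_sum_mul_log hp hpw0 hpw1 hq
  simp only [margW, margUW, mul_assoc]
  fun_prop

/- The hypothesis `jointD ≠ 0 → r ≠ 0` says that `p(v,u,w)` is absolutely continuous with
respect to `r(u|w)`; it keeps the logarithms in `GDE` away from the junk value `log 0 = 0`. -/
lemma GDE_eq (hpw1 : ∀ v u, (v, u) ∈ E → ∑ w, pw v u w = 1) (hq : CondDistOn E q)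
    (hr : ∀ v u w, jointD E p pw q v u w ≠ 0 → r w u ≠ 0) :
    GDE E p pw q r = ∑ v, ∑ u, p v * q v u * log (q v u) -
      ∑ u, ∑ w, margUW E p pw q u w * log (r w u) := by
  have hsplit : ∀ v u w, (if (v, u) ∈ E then p v * q v u * pw v u w * log (q v u / r w u)
      else 0) = jointD E p pw q v u w * log (q v u) - jointD E p pw q v u w * log (r w u) := by
    intro v u w
    rw [← mul_log_div_eq_of_ne fun h => ⟨?_, hr v u w h⟩]
    · simp only [jointD]
      split_ifs <;> simp
    · intro hq0
      simp [jointD, hq0] at h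
  simp only [GDE, hsplit, sum_sub_distrib, ← sum_mul, sum_jointD hpw1 hq]
  simp only [margUW, sum_mul]
  exact congrArg _ (sum_comm.trans (sum_congr rfl fun u _ => sum_comm))

lemma rstar_nonneg (hp : ∀ v, 0 ≤ p v) (hpw0 : ∀ v u w, 0 ≤ pw v u w) (hq : CondDistOn E q)
    (w : W) (u : U) : 0 ≤ rstar E p pw q w u :=
  div_nonneg (margUW_nonneg hp hpw0 hq) (margW_nonneg hp hpw0 hq)

lemma sum_rstar_le_one (w : W) : ∑ u, rstar E p pw q w u ≤ 1 := by
  simp only [rstar, ← sum_div]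
  exact div_self_le_one _

lemma rstar_ne_zero (hp : ∀ v, 0 ≤ p v) (hpw0 : ∀ v u w, 0 ≤ pw v u w) (hq : CondDistOn E q)
    {v : V} {u : U} {w : W} (h : jointD E p pw q v u w ≠ 0) : rstar E p pw q w u ≠ 0 := by
  have hm := ((jointD_nonneg hp hpw0 hq).lt_of_ne' h).trans_le (jointD_le_margUW hp hpw0 hq)
  exact (div_pos hm (hm.trans_le (margUW_le_margW hp hpw0 hq))).ne'

lemma GDE_rstar (hp : ∀ v, 0 < p v) (hpw0 : ∀ v u w, 0 ≤ pw v u w)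
    (hpw1 : ∀ v u, (v, u) ∈ E → ∑ w, pw v u w = 1) (hq : CondDistOn E q) :
    GDE E p pw q (rstar E p pw q) = Obj E p pw q := by
  rw [GDE_eq hpw1 hq fun _ _ _ => rstar_ne_zero (fun v => (hp v).le) hpw0 hq,
    Obj_eq hp hpw0 hpw1 hq]
  rfl

/-- Gibbs' inequality: `r* q` maximizes `∑ p(u,w) log r(u|w)` over sub-probability kernels `r`. -/
lemma Obj_le_GDE (hp : ∀ v, 0 < p v) (hpw0 : ∀ v u w, 0 ≤ pw v u w)
    (hpw1 : ∀ v u, (v, u) ∈ E → ∑ w, pw v u w = 1) (hq : CondDistOn E q)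
    (hr₀ : ∀ w u, 0 ≤ r w u) (hr₁ : ∀ w, ∑ u, r w u ≤ 1)
    (hr : ∀ v u w, jointD E p pw q v u w ≠ 0 → r w u ≠ 0) :
    Obj E p pw q ≤ GDE E p pw q r := by
  have hp' : ∀ v, 0 ≤ p v := fun v => (hp v).le
  rw [Obj_eq hp hpw0 hpw1 hq, GDE_eq hpw1 hq hr, sub_le_sub_iff_left, sum_comm,
    sum_comm (f := fun u w => margUW E p pw q u w *
      log (margUW E p pw q u w / margW E p pw q w))]
  refine sum_le_sum fun w _ => ?_
  have hterm : ∀ u, margUW E p pw q u w * log (r w u) ≤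
      margUW E p pw q u w * log (margUW E p pw q u w / margW E p pw q w) +
        (margW E p pw q w * r w u - margUW E p pw q u w) := fun u =>
    mul_log_le_mul_log_div_add (margUW_nonneg hp' hpw0 hq) (margUW_le_margW hp' hpw0 hq)
      (hr₀ w u) fun h => by
        obtain ⟨v, -, hv⟩ := exists_ne_zero_of_sum_ne_zero h
        exact hr v u w hv
  have hslack : ∑ u, (margW E p pw q w * r w u - margUW E p pw q u w) ≤ 0 := by
    have hM : ∑ u, margUW E p pw q u w = margW E p pw q w := rfl
    have := mul_le_mul_of_nonneg_left (hr₁ w) (margW_nonneg hp' hpw0 hq (w := w))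
    rw [sum_sub_distrib, ← mul_sum, hM]
    linarith
  calc _ ≤ _ := sum_le_sum fun u _ => hterm u
    _ ≤ _ := by rw [sum_add_distrib]; linarith

lemma GDE_add_smul_le (hp : ∀ v, 0 ≤ p v) (hpw0 : ∀ v u w, 0 ≤ pw v u w)
    (hq₀ : CondDistOn E q₀) (hq₁ : CondDistOn E q₁)
    (hr₀ : ∀ w u, 0 ≤ r₀ w u) (hr₁ : ∀ w u, 0 ≤ r₁ w u)
    (hdom₀ : ∀ v u w, jointD E p pw q₀ v u w ≠ 0 → r₀ w u ≠ 0)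
    (hdom₁ : ∀ v u w, jointD E p pw q₁ v u w ≠ 0 → r₁ w u ≠ 0) {a b : ℝ} (ha : 0 ≤ a)
    (hb : 0 ≤ b) :
    GDE E p pw (a • q₀ + b • q₁) (a • r₀ + b • r₁) ≤
      a * GDE E p pw q₀ r₀ + b * GDE E p pw q₁ r₁ := by
  simp only [GDE, mul_sum, ← sum_add_distrib]
  refine sum_le_sum fun v _ => sum_le_sum fun u _ => sum_le_sum fun w _ => ?_
  split_ifs with h
  · simp only [Pi.add_apply, Pi.smul_apply, smul_eq_mul]
    have hzero : ∀ {q : V → U → ℝ} {r : W → U → ℝ}, (jointD E p pw q v u w ≠ 0 → r w u ≠ 0) →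
        p v * pw v u w ≠ 0 → r w u = 0 → q v u = 0 :=
      fun hdom hc hr => by_contra fun hq => hdom (by
        simpa [jointD, h, mul_right_comm] using mul_ne_zero hc hq) hr
    have key : p v * pw v u w * ((a * q₀ v u + b * q₁ v u) *
        log ((a * q₀ v u + b * q₁ v u) / (a * r₀ w u + b * r₁ w u))) ≤
        p v * pw v u w * (a * (q₀ v u * log (q₀ v u / r₀ w u)) +
          b * (q₁ v u * log (q₁ v u / r₁ w u))) := by
      rcases (mul_nonneg (hp v) (hpw0 v u w)).eq_or_lt with hc | hc
      · simp [← hc]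
      exact mul_le_mul_of_nonneg_left (mul_log_div_convex_comb (hq₀.1 v u) (hq₁.1 v u)
        (hr₀ w u) (hr₁ w u) (hzero (hdom₀ v u w) hc.ne') (hzero (hdom₁ v u w) hc.ne') ha hb)
        hc.le
    linarith [key]
  · simp

lemma dominated_add_smul (hr₀ : ∀ w u, 0 ≤ r₀ w u) (hr₁ : ∀ w u, 0 ≤ r₁ w u)
    (hdom₀ : ∀ v u w, jointD E p pw q₀ v u w ≠ 0 → r₀ w u ≠ 0)
    (hdom₁ : ∀ v u w, jointD E p pw q₁ v u w ≠ 0 → r₁ w u ≠ 0) {a b : ℝ} (ha : 0 ≤ a)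
    (hb : 0 ≤ b) (v : V) (u : U) (w : W)
    (h : jointD E p pw (a • q₀ + b • q₁) v u w ≠ 0) : (a • r₀ + b • r₁) w u ≠ 0 := by
  rw [jointD_add_smul] at h
  simp only [Pi.add_apply, Pi.smul_apply, smul_eq_mul]
  by_cases ha₀ : a * jointD E p pw q₀ v u w = 0
  · obtain ⟨hb', hj⟩ : b ≠ 0 ∧ jointD E p pw q₁ v u w ≠ 0 := by simpa [ha₀] using h
    exact (add_pos_of_nonneg_of_pos (mul_nonneg ha (hr₀ w u))
      (mul_pos (hb.lt_of_ne' hb') ((hr₁ w u).lt_of_ne' (hdom₁ v u w hj)))).ne'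
  · obtain ⟨ha', hj⟩ := mul_ne_zero_iff.1 ha₀
    exact (add_pos_of_pos_of_nonneg (mul_pos (ha.lt_of_ne' ha') ((hr₀ w u).lt_of_ne'
      (hdom₀ v u w hj))) (mul_nonneg hb (hr₁ w u))).ne'

lemma convexOn_Obj (hp : ∀ v, 0 < p v) (hpw0 : ∀ v u w, 0 ≤ pw v u w)
    (hpw1 : ∀ v u, (v, u) ∈ E → ∑ w, pw v u w = 1) :
    ConvexOn ℝ {q | CondDistOn E q} (Obj E p pw) := by
  refine ⟨convex_setOf_condDistOn, fun q₀ hq₀ q₁ hq₁ a b ha hb hab => ?_⟩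
  have hp' : ∀ v, 0 ≤ p v := fun v => (hp v).le
  have hr₀ := rstar_nonneg hp' hpw0 hq₀
  have hr₁ := rstar_nonneg hp' hpw0 hq₁
  have hdom₀ : ∀ v u w, jointD E p pw q₀ v u w ≠ 0 → rstar E p pw q₀ w u ≠ 0 :=
    fun _ _ _ => rstar_ne_zero hp' hpw0 hq₀
  have hdom₁ : ∀ v u w, jointD E p pw q₁ v u w ≠ 0 → rstar E p pw q₁ w u ≠ 0 :=
    fun _ _ _ => rstar_ne_zero hp' hpw0 hq₁
  calc Obj E p pw (a • q₀ + b • q₁)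
      ≤ GDE E p pw (a • q₀ + b • q₁) (a • rstar E p pw q₀ + b • rstar E p pw q₁) := by
        refine Obj_le_GDE hp hpw0 hpw1 (convex_setOf_condDistOn hq₀ hq₁ ha hb hab)
          (fun w u => ?_) (fun w => ?_) (dominated_add_smul hr₀ hr₁ hdom₀ hdom₁ ha hb)
        · simp only [Pi.add_apply, Pi.smul_apply, smul_eq_mul]
          exact add_nonneg (mul_nonneg ha (hr₀ w u)) (mul_nonneg hb (hr₁ w u))
        · simp only [Pi.add_apply, Pi.smul_apply, smul_eq_mul, sum_add_distrib, ← mul_sum]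
          have h₀ : ∑ u, rstar E p pw q₀ w u ≤ 1 := sum_rstar_le_one w
          have h₁ : ∑ u, rstar E p pw q₁ w u ≤ 1 := sum_rstar_le_one w
          nlinarith
    _ ≤ a * GDE E p pw q₀ (rstar E p pw q₀) + b * GDE E p pw q₁ (rstar E p pw q₁) :=
        GDE_add_smul_le hp' hpw0 hq₀ hq₁ hr₀ hr₁ hdom₀ hdom₁ ha hb
    _ = a • Obj E p pw q₀ + b • Obj E p pw q₁ := by
        rw [GDE_rstar hp hpw0 hpw1 hq₀, GDE_rstar hp hpw0 hpw1 hq₁, smul_eq_mul, smul_eq_mul]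

lemma TL_le (hq : CondDistOn E q) (hL : LossE E p lt q ≤ L) :
    TL E p pw lt L ≤ Obj E p pw q :=
  sInf_le ⟨q, hq, hL, rfl⟩

lemma le_TL {c : EReal} (h : ∀ q, CondDistOn E q → LossE E p lt q ≤ L → c ≤ Obj E p pw q) :
    c ≤ TL E p pw lt L :=
  le_sInf <| by
    rintro _ ⟨q, hq, hL, rfl⟩
    exact h q hq hL

lemma antitone_TL : Antitone (TL E p pw lt) := fun _ _ hLL' =>
  le_TL fun _ hq hL => TL_le hq (hL.trans hLL')

lemma TL_eq_top (h : ∀ q, CondDistOn E q → L < LossE E p lt q) : TL E p pw lt L = ⊤ :=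
  top_le_iff.1 <| le_TL fun q hq hL => absurd hL (h q hq).not_ge

lemma exists_TL_eq (hp : ∀ v, 0 < p v) (hpw0 : ∀ v u w, 0 ≤ pw v u w)
    (hpw1 : ∀ v u, (v, u) ∈ E → ∑ w, pw v u w = 1)
    (hfeas : ∃ q, CondDistOn E q ∧ LossE E p lt q ≤ L) :
    ∃ q, CondDistOn E q ∧ LossE E p lt q ≤ L ∧ TL E p pw lt L = Obj E p pw q := by
  have hK : IsCompact ({q | CondDistOn E q} ∩ {q | LossE E p lt q ≤ L}) :=
    isCompact_setOf_condDistOn.inter_right (isClosed_le continuous_lossE continuous_const)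
  obtain ⟨q, ⟨hq, hL⟩, hmin⟩ :=
    hK.exists_isMinOn hfeas ((continuousOn_Obj hp hpw0 hpw1).mono Set.inter_subset_left)
  exact ⟨q, hq, hL, le_antisymm (TL_le hq hL)
    (le_TL fun q' hq' hL' => EReal.coe_le_coe_iff.2 (hmin ⟨hq', hL'⟩))⟩

lemma coe_toReal_TL (hp : ∀ v, 0 < p v) (hpw0 : ∀ v u w, 0 ≤ pw v u w)
    (hpw1 : ∀ v u, (v, u) ∈ E → ∑ w, pw v u w = 1)
    (hfeas : ∃ q, CondDistOn E q ∧ LossE E p lt q ≤ L) :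
    ((TL E p pw lt L).toReal : EReal) = TL E p pw lt L := by
  obtain ⟨q, -, -, hT⟩ := exists_TL_eq hp hpw0 hpw1 hfeas
  rw [hT, EReal.toReal_coe]

lemma toReal_TL_le (hp : ∀ v, 0 < p v) (hpw0 : ∀ v u w, 0 ≤ pw v u w)
    (hpw1 : ∀ v u, (v, u) ∈ E → ∑ w, pw v u w = 1) (hq : CondDistOn E q)
    (hL : LossE E p lt q ≤ L) : (TL E p pw lt L).toReal ≤ Obj E p pw q := by
  have h := TL_le (pw := pw) hq hL
  rwa [← coe_toReal_TL hp hpw0 hpw1 ⟨q, hq, hL⟩, EReal.coe_le_coe_iff] at h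

lemma exists_feasible (hmin : Lmin ∈ LossE E p lt '' {q | CondDistOn E q}) (hL : Lmin ≤ L) :
    ∃ q, CondDistOn E q ∧ LossE E p lt q ≤ L := by
  obtain ⟨q, hq, rfl⟩ := hmin
  exact ⟨q, hq, hL⟩

lemma antitoneOn_toReal_TL (hp : ∀ v, 0 < p v) (hpw0 : ∀ v u w, 0 ≤ pw v u w)
    (hpw1 : ∀ v u, (v, u) ∈ E → ∑ w, pw v u w = 1)
    (hmin : Lmin ∈ LossE E p lt '' {q | CondDistOn E q}) :
    AntitoneOn (fun L => (TL E p pw lt L).toReal) (Set.Ici Lmin) := fun x hx y hy hxy => by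
  have h := antitone_TL (E := E) (p := p) (pw := pw) (lt := lt) hxy
  rwa [← coe_toReal_TL hp hpw0 hpw1 (exists_feasible hmin hx),
    ← coe_toReal_TL hp hpw0 hpw1 (exists_feasible hmin hy), EReal.coe_le_coe_iff] at h

lemma convexOn_toReal_TL (hp : ∀ v, 0 < p v) (hpw0 : ∀ v u w, 0 ≤ pw v u w)
    (hpw1 : ∀ v u, (v, u) ∈ E → ∑ w, pw v u w = 1)
    (hmin : Lmin ∈ LossE E p lt '' {q | CondDistOn E q}) :
    ConvexOn ℝ (Set.Ici Lmin) fun L => (TL E p pw lt L).toReal := by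
  refine ⟨convex_Ici _, fun x hx y hy a b ha hb hab => ?_⟩
  obtain ⟨qx, hqx, hLx, hTx⟩ := exists_TL_eq hp hpw0 hpw1 (exists_feasible hmin hx)
  obtain ⟨qy, hqy, hLy, hTy⟩ := exists_TL_eq hp hpw0 hpw1 (exists_feasible hmin hy)
  have hloss : LossE E p lt (a • qx + b • qy) ≤ a • x + b • y := by
    rw [lossE_add_smul, smul_eq_mul, smul_eq_mul]
    exact add_le_add (mul_le_mul_of_nonneg_left hLx ha) (mul_le_mul_of_nonneg_left hLy hb)
  simp only [hTx, hTy, EReal.toReal_coe]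
  exact (toReal_TL_le hp hpw0 hpw1 (convex_setOf_condDistOn hqx hqy ha hb hab) hloss).trans
    ((convexOn_Obj hp hpw0 hpw1).2 hqx hqy ha hb hab)

lemma continuousWithinAt_toReal_TL (hp : ∀ v, 0 < p v) (hpw0 : ∀ v u w, 0 ≤ pw v u w)
    (hpw1 : ∀ v u, (v, u) ∈ E → ∑ w, pw v u w = 1)
    (hmin : Lmin ∈ LossE E p lt '' {q | CondDistOn E q}) :
    ContinuousWithinAt (fun L => (TL E p pw lt L).toReal) (Set.Ici Lmin) Lmin := by
  refine tendsto_order.2 ⟨fun c hc => ?_, fun c hc => ?_⟩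
  · obtain ⟨L', hL', h⟩ := isCompact_setOf_condDistOn.exists_gt_forall_lt_of_forall_le
      (continuousOn_Obj hp hpw0 hpw1) continuous_lossE.continuousOn
      fun q hq hL => hc.trans_le (toReal_TL_le hp hpw0 hpw1 hq hL)
    filter_upwards [self_mem_nhdsWithin, nhdsWithin_le_nhds (Iio_mem_nhds hL')] with L hL hLL'
    obtain ⟨q, hq, hLq, hT⟩ := exists_TL_eq hp hpw0 hpw1 (exists_feasible hmin hL)
    rw [hT, EReal.toReal_coe]
    exact h q hq (hLq.trans_lt hLL')
  · filter_upwards [self_mem_nhdsWithin] with L hL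
    exact (antitoneOn_toReal_TL hp hpw0 hpw1 hmin Set.self_mem_Ici hL hL).trans_lt hc

lemma continuousOn_TL (hp : ∀ v, 0 < p v) (hpw0 : ∀ v u w, 0 ≤ pw v u w)
    (hpw1 : ∀ v u, (v, u) ∈ E → ∑ w, pw v u w = 1)
    (hmin : Lmin ∈ LossE E p lt '' {q | CondDistOn E q}) :
    ContinuousOn (TL E p pw lt) (Set.Ici Lmin) := by
  have h := (convexOn_toReal_TL hp hpw0 hpw1 hmin).continuousOn_Ici
    (continuousWithinAt_toReal_TL hp hpw0 hpw1 hmin)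
  exact (continuous_coe_real_ereal.comp_continuousOn h).congr fun _ hL =>
    (coe_toReal_TL hp hpw0 hpw1 (exists_feasible hmin hL)).symm

lemma TL_le_of_eq (hp : ∀ v, 0 < p v) (hpw0 : ∀ v u w, 0 ≤ pw v u w)
    (hpw1 : ∀ v u, (v, u) ∈ E → ∑ w, pw v u w = 1)
    (hmin : IsLeast (LossE E p lt '' {q | CondDistOn E q}) Lmin) {x y : ℝ} (hx : Lmin ≤ x)
    (hxy : x < y) (heq : TL E p pw lt x = TL E p pw lt y) (z : ℝ) :
    TL E p pw lt y ≤ TL E p pw lt z := by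
  rcases lt_or_ge z Lmin with hz | hz
  · rw [TL_eq_top fun q hq => hz.trans_le (hmin.2 ⟨q, hq, rfl⟩)]
    exact le_top
  rcases le_or_gt z y with hzy | hyz
  · exact antitone_TL hzy
  have h := (convexOn_toReal_TL hp hpw0 hpw1 hmin.1).le_right_of_left_le'' hx hz hxy hyz.le
    (congrArg EReal.toReal heq).le
  rwa [← EReal.coe_le_coe_iff, coe_toReal_TL hp hpw0 hpw1 (exists_feasible hmin.1 hz),
    coe_toReal_TL hp hpw0 hpw1 (exists_feasible hmin.1 (hx.trans hxy.le))] at h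

lemma strictAntiOn_TL (hp : ∀ v, 0 < p v) (hpw0 : ∀ v u w, 0 ≤ pw v u w)
    (hpw1 : ∀ v u, (v, u) ∈ E → ∑ w, pw v u w = 1)
    (hmin : IsLeast (LossE E p lt '' {q | CondDistOn E q}) Lmin) (h0 : 0 ≤ Lmin) {Lmax : ℝ}
    (hLmax : Lmax ∈ lowerBounds {L : ℝ | 0 ≤ L ∧ TL E p pw lt L = ⨅ L' : ℝ, TL E p pw lt L'}) :
    StrictAntiOn (TL E p pw lt) (Set.Icc Lmin Lmax) := by
  intro x hx y hy hxy
  refine (antitone_TL hxy.le).lt_of_ne fun heq => ?_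
  have hglobal : TL E p pw lt x = ⨅ L' : ℝ, TL E p pw lt L' :=
    le_antisymm (le_iInf fun z => heq ▸ TL_le_of_eq hp hpw0 hpw1 hmin hx.1 hxy heq.symm z)
      (iInf_le _ x)
  exact (hLmax ⟨h0.trans hx.1, hglobal⟩).not_gt (hxy.trans_le hy.2)

lemma exists_lossE_eq_of_strictAntiOn (hp : ∀ v, 0 < p v) (hpw0 : ∀ v u w, 0 ≤ pw v u w)
    (hpw1 : ∀ v u, (v, u) ∈ E → ∑ w, pw v u w = 1)
    (hmin : IsLeast (LossE E p lt '' {q | CondDistOn E q}) Lmin) {Lmax : ℝ}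
    (hanti : StrictAntiOn (TL E p pw lt) (Set.Icc Lmin Lmax)) (hL : L ∈ Set.Icc Lmin Lmax) :
    ∃ q, CondDistOn E q ∧ LossE E p lt q = L ∧ TL E p pw lt L = Obj E p pw q := by
  obtain ⟨q, hq, hLq, hT⟩ := exists_TL_eq hp hpw0 hpw1 (exists_feasible hmin.1 hL.1)
  refine ⟨q, hq, hLq.eq_of_not_lt fun hlt => ?_, hT⟩
  have hq' : LossE E p lt q ∈ Set.Icc Lmin Lmax := ⟨hmin.2 ⟨q, hq, rfl⟩, hLq.trans hL.2⟩
  exact (hanti hq' hL hlt).not_ge (hT ▸ TL_le hq le_rfl)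

lemma TL_eq_of_le (hmax : ∀ q, CondDistOn E q → LossE E p lt q ≤ LMax) (hL : LMax ≤ L) :
    TL E p pw lt L = TL E p pw lt LMax :=
  le_antisymm (antitone_TL hL) (le_TL fun q hq _ => TL_le hq (hmax q hq))

end

/-- properties of the target-loss function `T(L)` across regimes:
infeasibility below `L_min`, feasibility and finiteness above, continuity on
`[L_min,∞)`, strict decrease on `[L_min, L_max]` with the loss constraint active,
and constancy above `L_Max`. -/
theorem targetLoss_regimes
    (E : Finset (V × U)) (hE : ∀ v : V, ∃ u, (v, u) ∈ E)
    (p : V → ℝ) (hp : ∀ v, 0 < p v)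
    (pw : V → U → W → ℝ) (hpw0 : ∀ v u w, 0 ≤ pw v u w)
    (hpw1 : ∀ v u, (v, u) ∈ E → ∑ w, pw v u w = 1)
    (lt : V → U → ℝ) (hlt : ∀ v u, 0 ≤ lt v u)
    (Lmin LMax Lmax : ℝ)
    (hLmin : Lmin = ∑ v, p v *
      (Finset.univ.filter (fun u => (v, u) ∈ E)).inf'
        (by obtain ⟨u, hu⟩ := hE v
            exact ⟨u, Finset.mem_filter.mpr ⟨Finset.mem_univ u, hu⟩⟩)
        (fun u => lt v u))
    (hLMax : LMax = ∑ v, p v *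
      (Finset.univ.filter (fun u => (v, u) ∈ E)).sup'
        (by obtain ⟨u, hu⟩ := hE v
            exact ⟨u, Finset.mem_filter.mpr ⟨Finset.mem_univ u, hu⟩⟩)
        (fun u => lt v u))
    (hLmax : IsLeast {L : ℝ | 0 ≤ L
      ∧ TL E p pw lt L = ⨅ L' : ℝ, TL E p pw lt L'} Lmax) :
    (∀ L : ℝ, 0 ≤ L → L < Lmin → TL E p pw lt L = ⊤)
      ∧ (∀ L : ℝ, Lmin ≤ L →
          (∃ q, CondDistOn E q ∧ LossE E p lt q ≤ L) ∧ TL E p pw lt L < ⊤)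
      ∧ ContinuousOn (TL E p pw lt) (Set.Ici Lmin)
      ∧ StrictAntiOn (TL E p pw lt) (Set.Icc Lmin Lmax)
      ∧ (∀ L ∈ Set.Icc Lmin Lmax, ∃ q, CondDistOn E q
          ∧ LossE E p lt q = L ∧ TL E p pw lt L = (Obj E p pw q : EReal))
      ∧ (∀ L : ℝ, LMax ≤ L → TL E p pw lt L = TL E p pw lt LMax) := by
  have hne : ∀ v, (Finset.univ.filter fun u => (v, u) ∈ E).Nonempty := fun v =>
    (hE v).imp fun u hu => Finset.mem_filter.2 ⟨Finset.mem_univ u, hu⟩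
  have hp' : ∀ v, 0 ≤ p v := fun v => (hp v).le
  have hmin : IsLeast (LossE E p lt '' {q | CondDistOn E q}) Lmin := by
    rw [hLmin]
    exact isLeast_lossE hp' hne
  have hmax : ∀ q, CondDistOn E q → LossE E p lt q ≤ LMax := fun q hq => by
    rw [hLMax]
    exact lossE_le_sum_sup' hp' hne hq
  have h0 : 0 ≤ Lmin := by
    obtain ⟨q, hq, rfl⟩ := hmin.1
    exact lossE_nonneg hp' hlt hq
  have hanti := strictAntiOn_TL hp hpw0 hpw1 hmin h0 hLmax.2
  refine ⟨fun L _ hL => TL_eq_top fun q hq => hL.trans_le (hmin.2 ⟨q, hq, rfl⟩),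
    fun L hL => ⟨exists_feasible hmin.1 hL, ?_⟩, continuousOn_TL hp hpw0 hpw1 hmin.1, hanti,
    fun L hL => exists_lossE_eq_of_strictAntiOn hp hpw0 hpw1 hmin hanti hL,
    fun L hL => TL_eq_of_le hmax hL⟩
  obtain ⟨q, -, -, hT⟩ := exists_TL_eq hp hpw0 hpw1 (exists_feasible hmin.1 hL)
  exact hT ▸ EReal.coe_lt_top _
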